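/- The cubic bracket π_3 on ℝ^N, defined by {u_i, u_{i+1}} = u_i u_{i+1}(u_i + u_{i+1}), {u_i, u_{i+2}} = u_i u_{i+1} u_{i+2}, and all other coordinate brackets zero, satisfies the Jacobi identity and hence is a Poisson bracket. -/

import Mathlib

open Finset

/-- The cubic Poisson bivector `π₃` on `ℝ^N`: `(π₃)_{i,i+1} = uᵢuᵢ₊₁(uᵢ+uᵢ₊₁)`,
`(π₃)_{i,i+2} = uᵢuᵢ₊₁uᵢ₊₂`, skew-symmetric completion, other entries zero. -/
noncomputable def pi3Biv {N : ℕ} (u : Fin N → ℝ) (i j : Fin N) : ℝ :=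
  if j.1 = i.1 + 1 then u i * u j * (u i + u j)
  else if i.1 = j.1 + 1 then -(u j * u i * (u j + u i))
  else if hij : j.1 = i.1 + 2 then u i * u ⟨i.1 + 1, by have := j.2; omega⟩ * u j
  else if hji : i.1 = j.1 + 2 then -(u j * u ⟨j.1 + 1, by have := i.2; omega⟩ * u i)
  else 0

/-- The bracket of two functions induced by a bivector `P`: `{f,g} = ∇fᵀ P ∇g`. -/
noncomputable def bivBracket {N : ℕ} (P : (Fin N → ℝ) → Fin N → Fin N → ℝ)
    (f g : (Fin N → ℝ) → ℝ) (u : Fin N → ℝ) : ℝ :=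
  ∑ i, ∑ j, fderiv ℝ f u (Pi.single i 1) * P u i j * fderiv ℝ g u (Pi.single j 1)

/-! ### Directional derivative toolkit -/

noncomputable def Dd {N : ℕ} (l : Fin N) (F : (Fin N → ℝ) → ℝ) (u : Fin N → ℝ) : ℝ :=
  fderiv ℝ F u (Pi.single l 1)

noncomputable def delta {N : ℕ} (b l : Fin N) : ℝ := if b = l then 1 else 0

section DD
variable {N : ℕ}

lemma Dd_coord (a l : Fin N) (u : Fin N → ℝ) : Dd l (fun v => v a) u = delta a l := by
  have : (fun v : Fin N → ℝ => v a) = (ContinuousLinearMap.proj a : (Fin N → ℝ) →L[ℝ] ℝ) := rfl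
  rw [Dd, this, ContinuousLinearMap.fderiv]
  simp [ContinuousLinearMap.proj_apply, Pi.single_apply, delta, eq_comm]

lemma Dd_mul3 {A B C : (Fin N → ℝ) → ℝ} {u : Fin N → ℝ} (hA : DifferentiableAt ℝ A u)
    (hB : DifferentiableAt ℝ B u) (hC : DifferentiableAt ℝ C u) (l : Fin N) :
    Dd l (fun v => A v * B v * C v) u
      = Dd l A u * B u * C u + A u * Dd l B u * C u + A u * B u * Dd l C u := by
  rw [Dd, fderiv_fun_mul (hA.fun_mul hB) hC, fderiv_fun_mul hA hB]
  simp [Dd]; ring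

lemma Dd_add {A B : (Fin N → ℝ) → ℝ} {u : Fin N → ℝ} (hA : DifferentiableAt ℝ A u)
    (hB : DifferentiableAt ℝ B u) (l : Fin N) :
    Dd l (fun v => A v + B v) u = Dd l A u + Dd l B u := by
  rw [Dd, fderiv_fun_add hA hB]; simp [Dd]

lemma Dd_sum {ι : Type*} {s : Finset ι} {F : ι → (Fin N → ℝ) → ℝ} {u : Fin N → ℝ}
    (hF : ∀ p ∈ s, DifferentiableAt ℝ (F p) u) (l : Fin N) :
    Dd l (fun v => ∑ p ∈ s, F p v) u = ∑ p ∈ s, Dd l (F p) u := by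
  rw [Dd, fderiv_fun_sum hF]; simp [Dd]

lemma contDiff_Dd {f : (Fin N → ℝ) → ℝ} (hf : ContDiff ℝ (⊤ : ℕ∞) f) (l : Fin N) :
    ContDiff ℝ (⊤ : ℕ∞) (Dd l f) :=
  (hf.fderiv_right (by simp)).clm_apply contDiff_const

lemma Dd_symm {f : (Fin N → ℝ) → ℝ} (hf : ContDiff ℝ (⊤ : ℕ∞) f) (u : Fin N → ℝ) (k i : Fin N) :
    Dd k (Dd i f) u = Dd i (Dd k f) u := by
  have hdf : DifferentiableAt ℝ (fderiv ℝ f) u :=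
    ((hf.fderiv_right (m := 1) (WithTop.coe_le_coe.mpr le_top)).differentiable one_ne_zero).differentiableAt
  have e : ∀ a b : Fin N,
      Dd a (Dd b f) u = fderiv ℝ (fderiv ℝ f) u (Pi.single a 1) (Pi.single b 1) := by
    intro a b
    rw [Dd, show (Dd b f) = fun v => (fderiv ℝ f v) (Pi.single b 1) from rfl,
      fderiv_clm_apply hdf (differentiableAt_const _)]
    simp
  rw [e, e]
  exact (hf.contDiffAt.isSymmSndFDerivAt (by rw [minSmoothness_of_isRCLikeNormedField]; exact WithTop.coe_le_coe.mpr le_top)) _ _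

end DD

section Sum4
variable {ι : Type*} [Fintype ι]

lemma sum4_prod (t : ι → ι → ι → ι → ℝ) :
    (∑ x : ι × ι × ι × ι, t x.1 x.2.1 x.2.2.1 x.2.2.2) = ∑ k, ∑ l, ∑ i, ∑ j, t k l i j := by
  simp only [Fintype.sum_prod_type]

lemma sum4_perm1 (t : ι → ι → ι → ι → ℝ) :
    (∑ k, ∑ l, ∑ i, ∑ j, t k l i j) = ∑ k, ∑ l, ∑ i, ∑ j, t j i k l := by
  rw [← sum4_prod, ← sum4_prod]
  exact (Equiv.sum_comp (⟨fun x => (x.2.2.2, x.2.2.1, x.1, x.2.1),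
    fun x => (x.2.2.1, x.2.2.2, x.2.1, x.1),
    fun ⟨a,b,c,d⟩ => rfl, fun ⟨a,b,c,d⟩ => rfl⟩ : (ι×ι×ι×ι) ≃ (ι×ι×ι×ι))
    (fun y => t y.1 y.2.1 y.2.2.1 y.2.2.2)).symm

lemma sum4_perm2 (t : ι → ι → ι → ι → ℝ) :
    (∑ k, ∑ l, ∑ i, ∑ j, t k l i j) = ∑ k, ∑ l, ∑ i, ∑ j, t i j l k := by
  rw [← sum4_prod, ← sum4_prod]
  exact (Equiv.sum_comp (⟨fun x => (x.2.2.1, x.2.2.2, x.2.1, x.1),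
    fun x => (x.2.2.2, x.2.2.1, x.1, x.2.1),
    fun ⟨a,b,c,d⟩ => rfl, fun ⟨a,b,c,d⟩ => rfl⟩ : (ι×ι×ι×ι) ≃ (ι×ι×ι×ι))
    (fun y => t y.1 y.2.1 y.2.2.1 y.2.2.2)).symm

lemma sum4_perm3 (t : ι → ι → ι → ι → ℝ) :
    (∑ k, ∑ l, ∑ i, ∑ j, t k l i j) = ∑ k, ∑ l, ∑ i, ∑ j, t i l j k := by
  rw [← sum4_prod, ← sum4_prod]
  exact (Equiv.sum_comp (⟨fun x => (x.2.2.1, x.2.1, x.2.2.2, x.1),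
    fun x => (x.2.2.2, x.2.1, x.1, x.2.2.1),
    fun ⟨a,b,c,d⟩ => rfl, fun ⟨a,b,c,d⟩ => rfl⟩ : (ι×ι×ι×ι) ≃ (ι×ι×ι×ι))
    (fun y => t y.1 y.2.1 y.2.2.1 y.2.2.2)).symm

lemma sum4_perm4 (t : ι → ι → ι → ι → ℝ) :
    (∑ k, ∑ l, ∑ i, ∑ j, t k l i j) = ∑ k, ∑ l, ∑ i, ∑ j, t j l k i := by
  rw [← sum4_prod, ← sum4_prod]
  exact (Equiv.sum_comp (⟨fun x => (x.2.2.2, x.2.1, x.1, x.2.2.1),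
    fun x => (x.2.2.1, x.2.1, x.2.2.2, x.1),
    fun ⟨a,b,c,d⟩ => rfl, fun ⟨a,b,c,d⟩ => rfl⟩ : (ι×ι×ι×ι) ≃ (ι×ι×ι×ι))
    (fun y => t y.1 y.2.1 y.2.2.1 y.2.2.2)).symm

lemma sum4_perm5 (t : ι → ι → ι → ι → ℝ) :
    (∑ k, ∑ l, ∑ i, ∑ j, t k l i j) = ∑ k, ∑ l, ∑ i, ∑ j, t k j l i := by
  rw [← sum4_prod, ← sum4_prod]
  exact (Equiv.sum_comp (⟨fun x => (x.1, x.2.2.2, x.2.1, x.2.2.1),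
    fun x => (x.1, x.2.2.1, x.2.2.2, x.2.1),
    fun ⟨a,b,c,d⟩ => rfl, fun ⟨a,b,c,d⟩ => rfl⟩ : (ι×ι×ι×ι) ≃ (ι×ι×ι×ι))
    (fun y => t y.1 y.2.1 y.2.2.1 y.2.2.2)).symm

variable {ι : Type*} [Fintype ι]

lemma key_alg (A B C : ι → ℝ) (p : ι → ι → ℝ) (q : ι → ι → ι → ℝ)
    (F2 G2 H2 : ι → ι → ℝ)
    (hF2 : ∀ i j, F2 i j = F2 j i) (hG2 : ∀ i j, G2 i j = G2 j i)
    (hH2 : ∀ i j, H2 i j = H2 j i)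
    (hp : ∀ i j, p j i = - p i j)
    (hS : ∀ a b c, (∑ l, (p a l * q l b c + p b l * q l c a + p c l * q l a b)) = 0) :
    (∑ k, ∑ l, ∑ i, ∑ j,
      (A k * p k l * (G2 l i * p i j * C j) + A k * p k l * (B i * q l i j * C j)
        + A k * p k l * (B i * p i j * H2 l j)
        + B k * p k l * (H2 l i * p i j * A j) + B k * p k l * (C i * q l i j * A j)
        + B k * p k l * (C i * p i j * F2 l j)
        + C k * p k l * (F2 l i * p i j * B j) + C k * p k l * (A i * q l i j * B j)
        + C k * p k l * (A i * p i j * G2 l j))) = 0 := by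
  have hG : (∑ k, ∑ l, ∑ i, ∑ j, A k * p k l * (G2 l i * p i j * C j))
      + (∑ k, ∑ l, ∑ i, ∑ j, C k * p k l * (A i * p i j * G2 l j)) = 0 := by
    rw [sum4_perm1 (fun k l i j => C k * p k l * (A i * p i j * G2 l j))]
    simp only [← Finset.sum_add_distrib]
    apply Finset.sum_eq_zero; intro k _
    apply Finset.sum_eq_zero; intro l _
    apply Finset.sum_eq_zero; intro i _
    apply Finset.sum_eq_zero; intro j _
    rw [hp i j, hG2 i l]; ring
  have hH : (∑ k, ∑ l, ∑ i, ∑ j, A k * p k l * (B i * p i j * H2 l j))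
      + (∑ k, ∑ l, ∑ i, ∑ j, B k * p k l * (H2 l i * p i j * A j)) = 0 := by
    rw [sum4_perm2 (fun k l i j => B k * p k l * (H2 l i * p i j * A j))]
    simp only [← Finset.sum_add_distrib]
    apply Finset.sum_eq_zero; intro k _
    apply Finset.sum_eq_zero; intro l _
    apply Finset.sum_eq_zero; intro i _
    apply Finset.sum_eq_zero; intro j _
    rw [hp k l, hH2 j l]; ring
  have hF : (∑ k, ∑ l, ∑ i, ∑ j, B k * p k l * (C i * p i j * F2 l j))
      + (∑ k, ∑ l, ∑ i, ∑ j, C k * p k l * (F2 l i * p i j * B j)) = 0 := by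
    rw [sum4_perm2 (fun k l i j => C k * p k l * (F2 l i * p i j * B j))]
    simp only [← Finset.sum_add_distrib]
    apply Finset.sum_eq_zero; intro k _
    apply Finset.sum_eq_zero; intro l _
    apply Finset.sum_eq_zero; intro i _
    apply Finset.sum_eq_zero; intro j _
    rw [hp k l, hF2 j l]; ring
  have hQ : (∑ k, ∑ l, ∑ i, ∑ j, A k * p k l * (B i * q l i j * C j))
      + (∑ k, ∑ l, ∑ i, ∑ j, B k * p k l * (C i * q l i j * A j))
      + (∑ k, ∑ l, ∑ i, ∑ j, C k * p k l * (A i * q l i j * B j)) = 0 := by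
    rw [sum4_perm3 (fun k l i j => B k * p k l * (C i * q l i j * A j)),
      sum4_perm4 (fun k l i j => C k * p k l * (A i * q l i j * B j))]
    simp only [← Finset.sum_add_distrib]
    rw [sum4_perm5 (fun k l i j =>
      A k * p k l * (B i * q l i j * C j) + B i * p i l * (C j * q l j k * A k)
        + C j * p j l * (A k * q l k i * B i))]
    apply Finset.sum_eq_zero; intro k _
    apply Finset.sum_eq_zero; intro l _
    apply Finset.sum_eq_zero; intro i _
    have : (∑ j, (A k * p k j * (B l * q j l i * C i) + B l * p l j * (C i * q j i k * A k)
        + C i * p i j * (A k * q j k l * B l)))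
        = ∑ j, A k * B l * C i * (p k j * q j l i + p l j * q j i k + p i j * q j k l) :=
      Finset.sum_congr rfl fun j _ => by ring
    rw [this, ← Finset.mul_sum, hS k l i, mul_zero]
  simp only [Finset.sum_add_distrib]
  linarith [hG, hH, hF, hQ]

end Sum4

section General
variable {N : ℕ}

theorem jacobi_general (P : (Fin N → ℝ) → Fin N → Fin N → ℝ)
    (hP : ∀ i j, ContDiff ℝ (⊤ : ℕ∞) fun u => P u i j)
    (hskew : ∀ (u : Fin N → ℝ) i j, P u j i = - P u i j)
    (hSch : ∀ (u : Fin N → ℝ) a b c,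
      (∑ l, (P u a l * Dd l (fun v => P v b c) u + P u b l * Dd l (fun v => P v c a) u
        + P u c l * Dd l (fun v => P v a b) u)) = 0)
    (f g h : (Fin N → ℝ) → ℝ) (hf : ContDiff ℝ (⊤ : ℕ∞) f) (hg : ContDiff ℝ (⊤ : ℕ∞) g)
    (hh : ContDiff ℝ (⊤ : ℕ∞) h) (u : Fin N → ℝ) :
    bivBracket P f (bivBracket P g h) u + bivBracket P g (bivBracket P h f) u
      + bivBracket P h (bivBracket P f g) u = 0 := by
  have hPd : ∀ (i j : Fin N) (u : Fin N → ℝ), DifferentiableAt ℝ (fun v => P v i j) u :=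
    fun i j u => ((hP i j).differentiable (by simp)).differentiableAt
  have hDd : ∀ (a : (Fin N → ℝ) → ℝ), ContDiff ℝ (⊤ : ℕ∞) a → ∀ (i : Fin N) (u : Fin N → ℝ),
      DifferentiableAt ℝ (Dd i a) u :=
    fun a ha i u => ((contDiff_Dd ha i).differentiable (by simp)).differentiableAt
  have cdin : ∀ (a b : (Fin N → ℝ) → ℝ), ContDiff ℝ (⊤ : ℕ∞) a → ContDiff ℝ (⊤ : ℕ∞) b → ∀ i : Fin N,
      ContDiff ℝ (⊤ : ℕ∞) (fun u => ∑ j, Dd i a u * P u i j * Dd j b u) := by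
    intro a b ha hb i
    apply ContDiff.sum; intro j _
    exact ((contDiff_Dd ha i).mul (hP i j)).mul (contDiff_Dd hb j)
  have cdsum : ∀ (a b : (Fin N → ℝ) → ℝ), ContDiff ℝ (⊤ : ℕ∞) a → ContDiff ℝ (⊤ : ℕ∞) b →
      ContDiff ℝ (⊤ : ℕ∞) (bivBracket P a b) := by
    intro a b ha hb
    have : bivBracket P a b = fun u => ∑ i, ∑ j, Dd i a u * P u i j * Dd j b u := rfl
    rw [this]
    exact ContDiff.sum fun i _ => cdin a b ha hb i
  have expand : ∀ (a b : (Fin N → ℝ) → ℝ) (ha : ContDiff ℝ (⊤ : ℕ∞) a) (hb : ContDiff ℝ (⊤ : ℕ∞) b)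
      (l : Fin N) (u : Fin N → ℝ),
      Dd l (bivBracket P a b) u = ∑ i, ∑ j,
        (Dd l (Dd i a) u * P u i j * Dd j b u
          + Dd i a u * Dd l (fun v => P v i j) u * Dd j b u
          + Dd i a u * P u i j * Dd l (Dd j b) u) := by
    intro a b ha hb l u
    have h1 : bivBracket P a b
        = fun u => ∑ i, (fun u => ∑ j, Dd i a u * P u i j * Dd j b u) u := rfl
    rw [h1, Dd_sum (fun i _ => ((cdin a b ha hb i).differentiable (by simp)).differentiableAt) l]
    refine Finset.sum_congr rfl fun i _ => ?_
    rw [Dd_sum (fun j _ => (((((contDiff_Dd ha i).mul (hP i j)).mul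
      (contDiff_Dd hb j))).differentiable (by simp)).differentiableAt) l]
    refine Finset.sum_congr rfl fun j _ => ?_
    exact Dd_mul3 (hDd a ha i u) (hPd i j u) (hDd b hb j u) l
  have KA := key_alg (fun k => Dd k f u) (fun k => Dd k g u) (fun k => Dd k h u)
    (fun i j => P u i j) (fun l i j => Dd l (fun v => P v i j) u)
    (fun k i => Dd k (Dd i f) u) (fun k i => Dd k (Dd i g) u) (fun k i => Dd k (Dd i h) u)
    (fun i j => Dd_symm hf u i j) (fun i j => Dd_symm hg u i j) (fun i j => Dd_symm hh u i j)
    (fun i j => hskew u i j) (fun a b c => hSch u a b c)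
  beta_reduce at KA
  show (∑ k, ∑ l, Dd k f u * P u k l * Dd l (bivBracket P g h) u)
      + (∑ k, ∑ l, Dd k g u * P u k l * Dd l (bivBracket P h f) u)
      + (∑ k, ∑ l, Dd k h u * P u k l * Dd l (bivBracket P f g) u) = 0
  simp only [expand g h hg hh, expand h f hh hf, expand f g hf hg]
  simp only [Finset.mul_sum, mul_add]
  simp only [← Finset.sum_add_distrib]
  refine Eq.trans ?_ KA
  refine Finset.sum_congr rfl fun k _ => Finset.sum_congr rfl fun l _ =>
    Finset.sum_congr rfl fun i _ => Finset.sum_congr rfl fun j _ => ?_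
  ring

end General
section Pi3
variable {N : ℕ}

lemma pi3_case1 (u : Fin N → ℝ) (i j : Fin N) (h : j.1 = i.1 + 1) :
    pi3Biv u i j = u i * u j * (u i + u j) := by
  unfold pi3Biv; rw [if_pos h]

lemma pi3_case1' (u : Fin N → ℝ) (i j : Fin N) (h : i.1 = j.1 + 1) :
    pi3Biv u i j = -(u j * u i * (u j + u i)) := by
  unfold pi3Biv; rw [if_neg (by omega), if_pos h]

lemma pi3_case2 (u : Fin N → ℝ) (i j : Fin N) (h : j.1 = i.1 + 2) (hm : i.1 + 1 < N) :
    pi3Biv u i j = u i * u ⟨i.1 + 1, hm⟩ * u j := by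
  unfold pi3Biv; rw [if_neg (by omega), if_neg (by omega), dif_pos h]

lemma pi3_case2' (u : Fin N → ℝ) (i j : Fin N) (h : i.1 = j.1 + 2) (hm : j.1 + 1 < N) :
    pi3Biv u i j = -(u j * u ⟨j.1 + 1, hm⟩ * u i) := by
  unfold pi3Biv; rw [if_neg (by omega), if_neg (by omega), dif_neg (by omega), dif_pos h]

lemma pi3_far (u : Fin N → ℝ) (i j : Fin N) (h1 : j.1 ≠ i.1 + 1) (h2 : i.1 ≠ j.1 + 1)
    (h3 : j.1 ≠ i.1 + 2) (h4 : i.1 ≠ j.1 + 2) : pi3Biv u i j = 0 := by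
  unfold pi3Biv; rw [if_neg h1, if_neg h2, dif_neg h3, dif_neg h4]

lemma pi3_contDiff (i j : Fin N) : ContDiff ℝ (⊤ : ℕ∞) (fun u : Fin N → ℝ => pi3Biv u i j) := by
  have hc : ∀ a : Fin N, ContDiff ℝ ((⊤ : ℕ∞) : WithTop ℕ∞) (fun u : Fin N → ℝ => u a) :=
    fun a => (ContinuousLinearMap.proj a : (Fin N → ℝ) →L[ℝ] ℝ).contDiff
  unfold pi3Biv
  split_ifs with h1 h2 h3 h4
  · exact ((hc i).mul (hc j)).mul ((hc i).add (hc j))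
  · exact (((hc j).mul (hc i)).mul ((hc j).add (hc i))).neg
  · exact ((hc i).mul (hc _)).mul (hc j)
  · exact (((hc j).mul (hc _)).mul (hc i)).neg
  · exact contDiff_const

lemma pi3_skew (u : Fin N → ℝ) (i j : Fin N) : pi3Biv u j i = - pi3Biv u i j := by
  unfold pi3Biv
  split_ifs <;> first | (exfalso; omega) | ring

noncomputable def dP {N : ℕ} (u : Fin N → ℝ) (l i j : Fin N) : ℝ :=
  if j.1 = i.1 + 1 then
    delta i l * (u j * (u i + u j) + u i * u j) + delta j l * (u i * (u i + u j) + u i * u j)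
  else if i.1 = j.1 + 1 then
    -(delta j l * (u i * (u j + u i) + u j * u i) + delta i l * (u j * (u j + u i) + u j * u i))
  else if hij : j.1 = i.1 + 2 then
    delta i l * (u ⟨i.1 + 1, by have := j.2; omega⟩ * u j)
      + delta ⟨i.1 + 1, by have := j.2; omega⟩ l * (u i * u j)
      + delta j l * (u i * u ⟨i.1 + 1, by have := j.2; omega⟩)
  else if hji : i.1 = j.1 + 2 then
    -(delta j l * (u ⟨j.1 + 1, by have := i.2; omega⟩ * u i)
      + delta ⟨j.1 + 1, by have := i.2; omega⟩ l * (u j * u i)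
      + delta i l * (u j * u ⟨j.1 + 1, by have := i.2; omega⟩))
  else 0

lemma Dd_neg {A : (Fin N → ℝ) → ℝ} {u : Fin N → ℝ} (l : Fin N) :
    Dd l (fun v => -A v) u = - Dd l A u := by
  rw [Dd, fderiv_fun_neg]; simp [Dd]

lemma diff_coord (a : Fin N) (u : Fin N → ℝ) :
    DifferentiableAt ℝ (fun v : Fin N → ℝ => v a) u :=
  (ContinuousLinearMap.proj a : (Fin N → ℝ) →L[ℝ] ℝ).differentiableAt

lemma Dd_pi3 (u : Fin N → ℝ) (l i j : Fin N) :
    Dd l (fun v => pi3Biv v i j) u = dP u l i j := by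
  unfold pi3Biv dP
  split_ifs with h1 h2 h3 h4
  · rw [Dd_mul3 (diff_coord i u) (diff_coord j u) ((diff_coord i u).fun_add (diff_coord j u)) l,
      Dd_add (diff_coord i u) (diff_coord j u) l, Dd_coord, Dd_coord]
    ring
  · rw [Dd_neg, Dd_mul3 (diff_coord j u) (diff_coord i u) ((diff_coord j u).fun_add (diff_coord i u)) l,
      Dd_add (diff_coord j u) (diff_coord i u) l, Dd_coord, Dd_coord]
    ring
  · rw [Dd_mul3 (diff_coord i u) (diff_coord _ u) (diff_coord j u) l,
      Dd_coord, Dd_coord, Dd_coord]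
    ring
  · rw [Dd_neg, Dd_mul3 (diff_coord j u) (diff_coord _ u) (diff_coord i u) l,
      Dd_coord, Dd_coord, Dd_coord]
    ring
  · rw [Dd, fderiv_fun_const]; simp

end Pi3
section Schouten
variable {N : ℕ}

lemma dP_case1 (u : Fin N → ℝ) (i j : Fin N) (h : j.1 = i.1 + 1) : ∀ l,
    dP u l i j = delta i l * (u j * (u i + u j) + u i * u j)
      + delta j l * (u i * (u i + u j) + u i * u j) := by
  intro l; unfold dP; rw [if_pos h]

lemma dP_case2 (u : Fin N → ℝ) (i j : Fin N) (h : j.1 = i.1 + 2) (hm : i.1 + 1 < N) : ∀ l,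
    dP u l i j = delta i l * (u ⟨i.1 + 1, hm⟩ * u j)
      + delta ⟨i.1 + 1, hm⟩ l * (u i * u j)
      + delta j l * (u i * u ⟨i.1 + 1, hm⟩) := by
  intro l; unfold dP; rw [if_neg (by omega), if_neg (by omega), dif_pos h]

lemma dP_case2' (u : Fin N → ℝ) (i j : Fin N) (h : i.1 = j.1 + 2) (hm : j.1 + 1 < N) : ∀ l,
    dP u l i j = -(delta j l * (u ⟨j.1 + 1, hm⟩ * u i)
      + delta ⟨j.1 + 1, hm⟩ l * (u j * u i)
      + delta i l * (u j * u ⟨j.1 + 1, hm⟩)) := by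
  intro l; unfold dP; rw [if_neg (by omega), if_neg (by omega), dif_neg (by omega), dif_pos h]

lemma dP_far (u : Fin N → ℝ) (i j : Fin N) (h1 : j.1 ≠ i.1 + 1) (h2 : i.1 ≠ j.1 + 1)
    (h3 : j.1 ≠ i.1 + 2) (h4 : i.1 ≠ j.1 + 2) : ∀ l, dP u l i j = 0 := by
  intro l; unfold dP; rw [if_neg h1, if_neg h2, dif_neg h3, dif_neg h4]

lemma dP_antisym (u : Fin N → ℝ) (l i j : Fin N) : dP u l j i = - dP u l i j := by
  unfold dP
  split_ifs <;> first | (exfalso; omega) | ring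

noncomputable def Ssum {N : ℕ} (u : Fin N → ℝ) (a b c : Fin N) : ℝ :=
  ∑ l, (pi3Biv u a l * dP u l b c + pi3Biv u b l * dP u l c a + pi3Biv u c l * dP u l a b)

lemma Ssum_rot (u : Fin N → ℝ) (a b c : Fin N) : Ssum u b c a = Ssum u a b c :=
  Finset.sum_congr rfl fun l _ => by ring

lemma Ssum_swap23 (u : Fin N → ℝ) (a b c : Fin N) : Ssum u a c b = - Ssum u a b c := by
  unfold Ssum
  rw [← Finset.sum_neg_distrib]
  refine Finset.sum_congr rfl fun l _ => ?_
  rw [dP_antisym u l b c, dP_antisym u l a b, dP_antisym u l c a]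
  ring

lemma Ssum_swap12 (u : Fin N → ℝ) (a b c : Fin N) : Ssum u b a c = - Ssum u a b c :=
  calc Ssum u b a c = Ssum u c b a := Ssum_rot u c b a
    _ = -Ssum u c a b := Ssum_swap23 u c a b
    _ = -Ssum u b c a := by rw [Ssum_rot u b c a]
    _ = -Ssum u a b c := by rw [Ssum_rot u a b c]

lemma Ssum_eq23 (u : Fin N → ℝ) (x a : Fin N) : Ssum u x a a = 0 := by
  have h := Ssum_swap23 u x a a
  linarith

end Schouten
section Sorted
variable {N : ℕ}

lemma Ssum_sorted (u : Fin N → ℝ) (a b c : Fin N) (h1 : a.1 < b.1) (h2 : b.1 < c.1) :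
    Ssum u a b c = 0 := by
  have hBN := b.isLt
  have hCN := c.isLt
  by_cases hb1 : b.1 = a.1 + 1
  · have hm1 : a.1 + 1 < N := by omega
    have hmk : (⟨a.1 + 1, hm1⟩ : Fin N) = b := Fin.ext (show a.1 + 1 = b.1 by omega)
    by_cases hc1 : c.1 = b.1 + 1
    · -- (1,1)
      have hca : c.1 = a.1 + 2 := by omega
      unfold Ssum
      simp only [dP_case1 u b c hc1, dP_case2' u c a hca hm1, dP_case1 u a b hb1]
      simp only [delta, mul_ite, ite_mul, one_mul, mul_one, zero_mul, mul_zero, mul_add,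
        mul_neg, Finset.sum_add_distrib, Finset.sum_neg_distrib, Finset.sum_ite_eq,
        Finset.mem_univ, if_true, Finset.sum_const_zero, add_zero, zero_add, neg_zero]
      try simp only [hmk]
      rw [pi3_case1 u a b hb1, pi3_case2 u a c hca hm1,
        pi3_case1' u b a (show b.1 = a.1 + 1 from hb1),
        pi3_far u b b (by omega) (by omega) (by omega) (by omega),
        pi3_case1 u b c hc1, pi3_case2' u c a hca hm1,
        pi3_case1' u c b (show c.1 = b.1 + 1 from hc1)]
      try simp only [hmk]
      ring
    · by_cases hc2 : c.1 = b.1 + 2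
      · -- (1,2)
        have hmb : b.1 + 1 < N := by omega
        unfold Ssum
        simp only [dP_case2 u b c hc2 hmb,
          dP_far u c a (by omega) (by omega) (by omega) (by omega),
          dP_case1 u a b hb1]
        simp only [delta, mul_ite, ite_mul, one_mul, mul_one, zero_mul, mul_zero, mul_add,
          mul_neg, Finset.sum_add_distrib, Finset.sum_neg_distrib, Finset.sum_ite_eq,
          Finset.mem_univ, if_true, Finset.sum_const_zero, add_zero, zero_add, neg_zero]
        try simp only [hmk]
        rw [pi3_case1 u a b hb1,
          pi3_case2 u a (⟨b.1 + 1, hmb⟩ : Fin N) (show b.1 + 1 = a.1 + 2 by omega) hm1,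
          pi3_far u a c (by omega) (by omega) (by omega) (by omega),
          pi3_far u c a (by omega) (by omega) (by omega) (by omega),
          pi3_case2' u c b hc2 hmb]
        try simp only [hmk]
        ring
      · -- (1,far)
        unfold Ssum
        simp only [dP_far u b c (by omega) (by omega) (by omega) (by omega),
          dP_far u c a (by omega) (by omega) (by omega) (by omega),
          dP_case1 u a b hb1]
        simp only [delta, mul_ite, ite_mul, one_mul, mul_one, zero_mul, mul_zero, mul_add,
          mul_neg, Finset.sum_add_distrib, Finset.sum_neg_distrib, Finset.sum_ite_eq,
          Finset.mem_univ, if_true, Finset.sum_const_zero, add_zero, zero_add, neg_zero]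
        rw [pi3_far u c a (by omega) (by omega) (by omega) (by omega),
          pi3_far u c b (by omega) (by omega) (by omega) (by omega)]
        ring
  · by_cases hb2 : b.1 = a.1 + 2
    · have hm1 : a.1 + 1 < N := by omega
      have hNb : a.1 + 1 + 1 < N := by omega
      have hmk2 : (⟨a.1 + 1 + 1, hNb⟩ : Fin N) = b := Fin.ext (show a.1 + 1 + 1 = b.1 by omega)
      by_cases hc1 : c.1 = b.1 + 1
      · -- (2,1)
        unfold Ssum
        simp only [dP_case1 u b c hc1,
          dP_far u c a (by omega) (by omega) (by omega) (by omega),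
          dP_case2 u a b hb2 hm1]
        simp only [delta, mul_ite, ite_mul, one_mul, mul_one, zero_mul, mul_zero, mul_add,
          mul_neg, Finset.sum_add_distrib, Finset.sum_neg_distrib, Finset.sum_ite_eq,
          Finset.mem_univ, if_true, Finset.sum_const_zero, add_zero, zero_add, neg_zero]
        rw [pi3_case2 u a b hb2 hm1,
          pi3_far u a c (by omega) (by omega) (by omega) (by omega),
          pi3_far u c a (by omega) (by omega) (by omega) (by omega),
          pi3_case2' u c (⟨a.1 + 1, hm1⟩ : Fin N) (show c.1 = a.1 + 1 + 2 by omega) hNb,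
          pi3_case1' u c b (show c.1 = b.1 + 1 from hc1)]
        try simp only [hmk2]
        ring
      · by_cases hc2 : c.1 = b.1 + 2
        · -- (2,2)
          have hmb : b.1 + 1 < N := by omega
          unfold Ssum
          simp only [dP_case2 u b c hc2 hmb,
            dP_far u c a (by omega) (by omega) (by omega) (by omega),
            dP_case2 u a b hb2 hm1]
          simp only [delta, mul_ite, ite_mul, one_mul, mul_one, zero_mul, mul_zero, mul_add,
            mul_neg, Finset.sum_add_distrib, Finset.sum_neg_distrib, Finset.sum_ite_eq,
            Finset.mem_univ, if_true, Finset.sum_const_zero, add_zero, zero_add, neg_zero]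
          rw [pi3_case2 u a b hb2 hm1,
            pi3_far u a (⟨b.1 + 1, hmb⟩ : Fin N) (show ¬(b.1 + 1 = a.1 + 1) by omega) (show ¬(a.1 = b.1 + 1 + 1) by omega) (show ¬(b.1 + 1 = a.1 + 2) by omega) (show ¬(a.1 = b.1 + 1 + 2) by omega),
            pi3_far u a c (by omega) (by omega) (by omega) (by omega),
            pi3_far u c a (by omega) (by omega) (by omega) (by omega),
            pi3_far u c (⟨a.1 + 1, hm1⟩ : Fin N) (show ¬(a.1 + 1 = c.1 + 1) by omega) (show ¬(c.1 = a.1 + 1 + 1) by omega) (show ¬(a.1 + 1 = c.1 + 2) by omega) (show ¬(c.1 = a.1 + 1 + 2) by omega),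
            pi3_case2' u c b hc2 hmb]
          ring
        · -- (2,far)
          unfold Ssum
          simp only [dP_far u b c (by omega) (by omega) (by omega) (by omega),
            dP_far u c a (by omega) (by omega) (by omega) (by omega),
            dP_case2 u a b hb2 hm1]
          simp only [delta, mul_ite, ite_mul, one_mul, mul_one, zero_mul, mul_zero, mul_add,
            mul_neg, Finset.sum_add_distrib, Finset.sum_neg_distrib, Finset.sum_ite_eq,
            Finset.mem_univ, if_true, Finset.sum_const_zero, add_zero, zero_add, neg_zero]
          rw [pi3_far u c a (by omega) (by omega) (by omega) (by omega),
            pi3_far u c (⟨a.1 + 1, hm1⟩ : Fin N) (show ¬(a.1 + 1 = c.1 + 1) by omega) (show ¬(c.1 = a.1 + 1 + 1) by omega) (show ¬(a.1 + 1 = c.1 + 2) by omega) (show ¬(c.1 = a.1 + 1 + 2) by omega),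
            pi3_far u c b (by omega) (by omega) (by omega) (by omega)]
          ring
    · -- b ≥ a+3
      by_cases hc1 : c.1 = b.1 + 1
      · unfold Ssum
        simp only [dP_case1 u b c hc1,
          dP_far u c a (by omega) (by omega) (by omega) (by omega),
          dP_far u a b (by omega) (by omega) (by omega) (by omega)]
        simp only [delta, mul_ite, ite_mul, one_mul, mul_one, zero_mul, mul_zero, mul_add,
          mul_neg, Finset.sum_add_distrib, Finset.sum_neg_distrib, Finset.sum_ite_eq,
          Finset.mem_univ, if_true, Finset.sum_const_zero, add_zero, zero_add, neg_zero]
        rw [pi3_far u a b (by omega) (by omega) (by omega) (by omega),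
          pi3_far u a c (by omega) (by omega) (by omega) (by omega)]
        ring
      · by_cases hc2 : c.1 = b.1 + 2
        · have hmb : b.1 + 1 < N := by omega
          unfold Ssum
          simp only [dP_case2 u b c hc2 hmb,
            dP_far u c a (by omega) (by omega) (by omega) (by omega),
            dP_far u a b (by omega) (by omega) (by omega) (by omega)]
          simp only [delta, mul_ite, ite_mul, one_mul, mul_one, zero_mul, mul_zero, mul_add,
            mul_neg, Finset.sum_add_distrib, Finset.sum_neg_distrib, Finset.sum_ite_eq,
            Finset.mem_univ, if_true, Finset.sum_const_zero, add_zero, zero_add, neg_zero]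
          rw [pi3_far u a b (by omega) (by omega) (by omega) (by omega),
            pi3_far u a (⟨b.1 + 1, hmb⟩ : Fin N) (show ¬(b.1 + 1 = a.1 + 1) by omega) (show ¬(a.1 = b.1 + 1 + 1) by omega) (show ¬(b.1 + 1 = a.1 + 2) by omega) (show ¬(a.1 = b.1 + 1 + 2) by omega),
            pi3_far u a c (by omega) (by omega) (by omega) (by omega)]
          ring
        · unfold Ssum
          simp only [dP_far u b c (by omega) (by omega) (by omega) (by omega),
            dP_far u c a (by omega) (by omega) (by omega) (by omega),
            dP_far u a b (by omega) (by omega) (by omega) (by omega)]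
          simp

end Sorted

section Final
variable {N : ℕ}

lemma Ssum_zero (u : Fin N → ℝ) (a b c : Fin N) : Ssum u a b c = 0 := by
  by_cases hab : a = b
  · subst hab
    rw [Ssum_rot u c a a]
    exact Ssum_eq23 u c a
  by_cases hbc : b = c
  · subst hbc
    exact Ssum_eq23 u a b
  by_cases hac : a = c
  · subst hac
    rw [Ssum_rot u a a b, Ssum_rot u b a a]
    exact Ssum_eq23 u b a
  rcases lt_trichotomy a.1 b.1 with h1 | h1 | h1
  · rcases lt_trichotomy b.1 c.1 with h2 | h2 | h2
    · exact Ssum_sorted u a b c h1 h2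
    · exact absurd (Fin.ext h2) hbc
    · rcases lt_trichotomy a.1 c.1 with h3 | h3 | h3
      · have hs := Ssum_sorted u a c b h3 h2
        have hw := Ssum_swap23 u a c b
        linarith
      · exact absurd (Fin.ext h3) hac
      · rw [Ssum_rot u c a b]
        exact Ssum_sorted u c a b h3 h1
  · exact absurd (Fin.ext h1) hab
  · rcases lt_trichotomy a.1 c.1 with h3 | h3 | h3
    · have hs := Ssum_sorted u b a c h1 h3
      have hw := Ssum_swap12 u b a c
      linarith
    · exact absurd (Fin.ext h3) hac
    · rcases lt_trichotomy b.1 c.1 with h4 | h4 | h4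
      · rw [← Ssum_rot u a b c]
        exact Ssum_sorted u b c a h4 h3
      · exact absurd (Fin.ext h4) hbc
      · have e1 : Ssum u a b c = Ssum u c a b := Ssum_rot u c a b
        have e2 : Ssum u c a b = -Ssum u c b a := Ssum_swap23 u c b a
        have hs := Ssum_sorted u c b a h4 h1
        linarith [e1, e2, hs]

lemma pi3_schouten : ∀ (u : Fin N → ℝ) (a b c : Fin N),
    (∑ l, (pi3Biv u a l * Dd l (fun v => pi3Biv v b c) u
      + pi3Biv u b l * Dd l (fun v => pi3Biv v c a) u
      + pi3Biv u c l * Dd l (fun v => pi3Biv v a b) u)) = 0 := by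
  intro u a b c
  simp only [Dd_pi3]
  exact Ssum_zero u a b c

end Final

theorem pi3_jacobi {N : ℕ} (f g h : (Fin N → ℝ) → ℝ)
    (hf : ContDiff ℝ (⊤ : ℕ∞) f) (hg : ContDiff ℝ (⊤ : ℕ∞) g) (hh : ContDiff ℝ (⊤ : ℕ∞) h) :
    ∀ u : Fin N → ℝ,
      bivBracket pi3Biv f (bivBracket pi3Biv g h) u
        + bivBracket pi3Biv g (bivBracket pi3Biv h f) u
        + bivBracket pi3Biv h (bivBracket pi3Biv f g) u = 0 := fun u =>
  jacobi_general pi3Biv (fun i j => pi3_contDiff i j) (fun u i j => pi3_skew u i j)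
    pi3_schouten f g h hf hg hh u
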